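/- arXiv:2405.00549 — 2 statements merged into one kernel-verified Lean document; each statement's English description precedes it below -/
import Mathlib

section
/- Let W > 0 and W_p ≥ 0 be reals and β ∈ [0,1). Let A_att, A_adv be nonnegative reals with A_att ≤ W and A_adv ≤ β·W. Define Q = A_att/W and H = W - A_adv (honest committee weight), and H_att = A_att - A_adv (a lower bound on honest attesting weight). If Q > (1/2)(1 + W_p/W) + β, then H_att/H > (1/(2(1-β)))·(1 + W_p/W). -/
/-! Removing adversarial weight `x` from both the attesting weight and the committee weight can
only lower the ratio `(A_att - x) / (W - x)`, since `A_att ≤ W`. So the honest ratio is at least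
its value at the worst case `x = β W`, which is `(Q - β) / (1 - β)`, and the hypothesis on `Q`
bounds this from below. -/

open Set

theorem antitoneOn_sub_div_sub {a b : ℝ} (hab : a ≤ b) :
    AntitoneOn (fun x => (a - x) / (b - x)) (Iio b) := by
  intro x hx y hy hxy
  rw [div_le_div_iff₀ (sub_pos.2 hy) (sub_pos.2 hx)]
  nlinarith [mul_nonneg (sub_nonneg.2 hab) (sub_nonneg.2 hxy)]

theorem stmt_2_general (W W_p β A_att A_adv : ℝ)
    (hW : 0 < W) (hβ1 : β < 1)
    (hAattW : A_att ≤ W)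
    (hAadv : A_adv ≤ β * W)
    (hQ : A_att / W > (1 / 2) * (1 + W_p / W) + β) :
    (A_att - A_adv) / (W - A_adv) > (1 / (2 * (1 - β))) * (1 + W_p / W) := by
  have h1β : 0 < 1 - β := sub_pos.2 hβ1
  have hβW : β * W < W := by nlinarith
  calc (1 / (2 * (1 - β))) * (1 + W_p / W) = (1 / 2) * (1 + W_p / W) / (1 - β) := by
        field_simp
    _ < (A_att / W - β) / (1 - β) := div_lt_div_of_pos_right (by linarith) h1β
    _ = (A_att - β * W) / (W - β * W) := by
        field_simp
    _ ≤ (A_att - A_adv) / (W - A_adv) :=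
        antitoneOn_sub_div_sub hAattW (hAadv.trans_lt hβW) hβW hAadv

/-- The observable safety-indicator condition on `Q = A_att/W` implies the condition on the
honest safety indicator `H_att/H` with `H = W - A_adv` and `H_att = A_att - A_adv`. -/
theorem stmt_2 (W W_p β A_att A_adv : ℝ)
    (hW : 0 < W) (hWp : 0 ≤ W_p) (hβ0 : 0 ≤ β) (hβ1 : β < 1)
    (hAatt0 : 0 ≤ A_att) (hAattW : A_att ≤ W)
    (hAadv0 : 0 ≤ A_adv) (hAadv : A_adv ≤ β * W)
    (hQ : A_att / W > (1 / 2) * (1 + W_p / W) + β) :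
    (A_att - A_adv) / (W - A_adv) > (1 / (2 * (1 - β))) * (1 + W_p / W) :=
  stmt_2_general W W_p β A_att A_adv hW hβ1 hAattW hAadv hQ
end

section
/- Let V, V', V'' be finite validator sets with weight functions w, w', w'' (at checkpoints C, C', C'' with C ⪯ C' ⪯ C'', each one epoch apart). Assume, for each consecutive pair: exits satisfy Σ_{v ∈ A \ B} w_A(v) ≤ ε·W_A (where W_A is the total weight at the earlier checkpoint); entries satisfy Σ_{v ∈ B \ A} w_B(v) ≤ ε·W_A; rewards satisfy w_B(v) ≤ (1+ρ)·w_A(v) for v in both; penalties satisfy w_B(v) ≥ (1-π)·w_A(v) for non-slashed v in both; and 1 ≥ π + ε·(1+ρ). Then the weight, measured at C, of validators in V but not in V'' satisfies Σ_{v ∈ V \ V''} w(v) ≤ W·ε·(2 + ρ·(1-ε) - π)/(1-π), where W = Σ_{v ∈ V} w(v). -/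
/-!
Split `V \ V''` into the validators that already left at `C'` and those that were still in
`V ∩ V'` but left afterwards. The first part weighs at most `εW`. The penalty bound makes the
second part at most `1/(1-π)` times its weight at `C'`, which the exit bound at `C'` caps by
`ε W'`, and rewards plus entries give `W' ≤ (1+ρ)(W - E) + εW`, where `E` is the first part.
The resulting bound is nondecreasing in `E` exactly when `1 ≥ π + ε(1+ρ)`, so it is largest at
`E = εW`, where it equals the claimed value.
-/

open Finset

section WeightedSets

variable {α : Type*} [DecidableEq α] {A B C : Finset α} {f g : α → ℝ}

theorem sum_sdiff_le_sum_sdiff_add_sum_inter_sdiff (hf : ∀ v, 0 ≤ f v) :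
    ∑ v ∈ A \ C, f v ≤ ∑ v ∈ A \ B, f v + ∑ v ∈ (A ∩ B) \ C, f v := by
  have hsub : A \ C ⊆ (A \ B) ∪ ((A ∩ B) \ C) := by
    intro v
    simp only [mem_sdiff, mem_union, mem_inter]
    tauto
  have hdisj : Disjoint (A \ B) ((A ∩ B) \ C) :=
    disjoint_left.mpr fun v hAB hABC => (mem_sdiff.mp hAB).2 (mem_inter.mp (mem_sdiff.mp hABC).1).2
  calc ∑ v ∈ A \ C, f v ≤ ∑ v ∈ (A \ B) ∪ ((A ∩ B) \ C), f v :=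
        sum_le_sum_of_subset_of_nonneg hsub fun v _ _ => hf v
    _ = _ := sum_union hdisj

theorem mul_sum_inter_sdiff_le_sum_sdiff {c : ℝ} (hg : ∀ v, 0 ≤ g v)
    (hfg : ∀ v ∈ A ∩ B, c * f v ≤ g v) :
    c * ∑ v ∈ (A ∩ B) \ C, f v ≤ ∑ v ∈ B \ C, g v := by
  calc c * ∑ v ∈ (A ∩ B) \ C, f v ≤ ∑ v ∈ (A ∩ B) \ C, g v := by
        rw [mul_sum]
        exact sum_le_sum fun v hv => hfg v (mem_sdiff.mp hv).1
    _ ≤ ∑ v ∈ B \ C, g v :=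
        sum_le_sum_of_subset_of_nonneg (sdiff_subset_sdiff inter_subset_right le_rfl)
          fun v _ _ => hg v

theorem sum_le_mul_sum_inter_add_sum_sdiff {c : ℝ} (hfg : ∀ v ∈ A ∩ B, g v ≤ c * f v) :
    ∑ v ∈ B, g v ≤ c * ∑ v ∈ A ∩ B, f v + ∑ v ∈ B \ A, g v := by
  rw [← sum_inter_add_sum_sdiff B A g, inter_comm, mul_sum]
  gcongr with v hv
  exact hfg v hv

end WeightedSets

theorem two_epoch_exit_bound_of_split {X E M S W ε ρ π : ℝ} (hε0 : 0 ≤ ε) (hπ1 : π < 1)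
    (hstruct : 1 ≥ π + ε * (1 + ρ)) (hX : X ≤ E + M) (hE : E ≤ ε * W)
    (hM : (1 - π) * M ≤ ε * S) (hS : S ≤ (1 + ρ) * (W - E) + ε * W) :
    X ≤ W * ε * (2 + ρ * (1 - ε) - π) / (1 - π) := by
  rw [le_div_iff₀ (by linarith)]
  have hεS : ε * S ≤ ε * ((1 + ρ) * (W - E) + ε * W) := mul_le_mul_of_nonneg_left hS hε0
  have hmono : 0 ≤ (ε * W - E) * (1 - π - ε * (1 + ρ)) :=
    mul_nonneg (by linarith) (by linarith)
  nlinarith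

theorem stmt_8_general {α : Type*} [DecidableEq α] (V V' V'' : Finset α) (w w' : α → ℝ)
    (ε ρ π : ℝ) (hε0 : 0 ≤ ε) (hπ1 : π < 1)
    (hstruct : 1 ≥ π + ε * (1 + ρ))
    (hw : ∀ v, 0 ≤ w v) (hw' : ∀ v, 0 ≤ w' v)
    (hexit1 : ∑ v ∈ V \ V', w v ≤ ε * ∑ v ∈ V, w v)
    (hexit2 : ∑ v ∈ V' \ V'', w' v ≤ ε * ∑ v ∈ V', w' v)
    (hentry1 : ∑ v ∈ V' \ V, w' v ≤ ε * ∑ v ∈ V, w v)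
    (hreward1 : ∀ v ∈ V ∩ V', w' v ≤ (1 + ρ) * w v)
    (hpen1 : ∀ v ∈ V ∩ V', w' v ≥ (1 - π) * w v) :
    ∑ v ∈ V \ V'', w v ≤ (∑ v ∈ V, w v) * ε * (2 + ρ * (1 - ε) - π) / (1 - π) := by
  have hsplit := sum_sdiff_le_sum_sdiff_add_sum_inter_sdiff (A := V) (B := V') (C := V'') hw
  have hstayed : (1 - π) * ∑ v ∈ (V ∩ V') \ V'', w v ≤ ε * ∑ v ∈ V', w' v :=
    (mul_sum_inter_sdiff_le_sum_sdiff hw' hpen1).trans hexit2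
  have hinter : ∑ v ∈ V ∩ V', w v = ∑ v ∈ V, w v - ∑ v ∈ V \ V', w v := by
    linarith [sum_inter_add_sum_sdiff V V' w]
  have hW' : ∑ v ∈ V', w' v ≤
      (1 + ρ) * (∑ v ∈ V, w v - ∑ v ∈ V \ V', w v) + ε * ∑ v ∈ V, w v := by
    have hrewards := sum_le_mul_sum_inter_add_sum_sdiff hreward1
    rw [hinter] at hrewards
    linarith
  exact two_epoch_exit_bound_of_split hε0 hπ1 hstruct hsplit hexit1 hstayed hW'

/-- Bound on exits across a two-epoch distance: the weight (measured at the first checkpoint)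
of validators that have exited two epochs later is at most
`W·ε·(2 + ρ·(1-ε) - π)/(1-π)`. -/
theorem stmt_8 {α : Type*} [DecidableEq α] (V V' V'' : Finset α) (w w' w'' : α → ℝ)
    (ε ρ π : ℝ) (hε0 : 0 ≤ ε) (hε1 : ε < 1) (hρ0 : 0 ≤ ρ) (hρ1 : ρ < 1)
    (hπ0 : 0 ≤ π) (hπ1 : π < 1)
    (hstruct : 1 ≥ π + ε * (1 + ρ))
    (hw : ∀ v, 0 ≤ w v) (hw' : ∀ v, 0 ≤ w' v) (hw'' : ∀ v, 0 ≤ w'' v)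
    (hexit1 : ∑ v ∈ V \ V', w v ≤ ε * ∑ v ∈ V, w v)
    (hexit2 : ∑ v ∈ V' \ V'', w' v ≤ ε * ∑ v ∈ V', w' v)
    (hentry1 : ∑ v ∈ V' \ V, w' v ≤ ε * ∑ v ∈ V, w v)
    (hentry2 : ∑ v ∈ V'' \ V', w'' v ≤ ε * ∑ v ∈ V', w' v)
    (hreward1 : ∀ v ∈ V ∩ V', w' v ≤ (1 + ρ) * w v)
    (hreward2 : ∀ v ∈ V' ∩ V'', w'' v ≤ (1 + ρ) * w' v)
    (hpen1 : ∀ v ∈ V ∩ V', w' v ≥ (1 - π) * w v)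
    (hpen2 : ∀ v ∈ V' ∩ V'', w'' v ≥ (1 - π) * w' v) :
    ∑ v ∈ V \ V'', w v ≤ (∑ v ∈ V, w v) * ε * (2 + ρ * (1 - ε) - π) / (1 - π) :=
  stmt_8_general V V' V'' w w' ε ρ π hε0 hπ1 hstruct hw hw' hexit1 hexit2 hentry1 hreward1 hpen1
end
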